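/- arXiv:math/0212193 — 2 statements merged into one kernel-verified Lean document; each statement's English description precedes it below -/
import Mathlib

section
/- For any finite-dimensional Hermitian vector space V, there exists N such that for all a > N, the (a,a)-moment of the Sato-Tate measure of the unitary group satisfies ∫_{U(V)} |tr(u)|^{2a} du > (dim V − 1)^{2a}. -/
/-!
The continuous function `u ↦ ‖tr u‖` takes the value `n` at `u = 1`, so it exceeds some
`c > n - 1` on a nonempty open set, which has positive Haar measure `m`. Hence the moment is at
least `c ^ (2a) * m`, and this beats `(n - 1) ^ (2a)` once `a` is large. The unitary group is
compact, so its Haar measure is finite and the moments are integrable.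
-/

open MeasureTheory Matrix Filter Topology

theorem Matrix.isCompact_unitaryGroup {𝕜 ι : Type*} [RCLike 𝕜] [Fintype ι] [DecidableEq ι] :
    IsCompact (unitaryGroup ι 𝕜 : Set (Matrix ι ι 𝕜)) :=
  (isCompact_univ_pi fun _ => isCompact_univ_pi fun _ =>
      ProperSpace.isCompact_closedBall (0 : 𝕜) 1).of_isClosed_subset
    (isClosed_unitary (R := Matrix ι ι 𝕜)) fun _ hU i _ j _ =>
      mem_closedBall_zero_iff.mpr (entry_norm_bound_of_unitary hU i j)

instance Matrix.compactSpace_unitaryGroup {𝕜 ι : Type*} [RCLike 𝕜] [Fintype ι] [DecidableEq ι] :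
    CompactSpace (unitaryGroup ι 𝕜) :=
  isCompact_iff_compactSpace.mp isCompact_unitaryGroup

theorem pow_mul_measureReal_lt_le_integral_pow {X : Type*} [TopologicalSpace X] [MeasurableSpace X]
    [OpensMeasurableSpace X] [CompactSpace X] (μ : Measure X) [IsFiniteMeasureOnCompacts μ]
    {f : X → ℝ} (hf : Continuous f) (hf0 : 0 ≤ f) {c : ℝ} (hc : 0 ≤ c) (k : ℕ) :
    c ^ k * μ.real {x | c < f x} ≤ ∫ x, f x ^ k ∂μ := by
  have hint : Integrable (fun x => f x ^ k) μ :=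
    (hf.pow k).integrable_of_hasCompactSupport (.of_compactSpace _)
  calc c ^ k * μ.real {x | c < f x}
      ≤ c ^ k * μ.real {x | c ^ k ≤ f x ^ k} := by
        gcongr
        · exact measure_ne_top _ _
        · exact fun hx => pow_le_pow_left₀ hc hx.le k
    _ ≤ ∫ x, f x ^ k ∂μ :=
        mul_meas_ge_le_integral_of_nonneg (.of_forall fun x => pow_nonneg (hf0 x) k) hint _

theorem eventually_pow_lt_integral_pow {X : Type*} [TopologicalSpace X] [MeasurableSpace X]
    [OpensMeasurableSpace X] [CompactSpace X] (μ : Measure X) [IsFiniteMeasureOnCompacts μ]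
    [μ.IsOpenPosMeasure] {f : X → ℝ} (hf : Continuous f) (hf0 : 0 ≤ f) {L : ℝ} (hL : 0 ≤ L)
    {x₀ : X} (hx₀ : L < f x₀) :
    ∀ᶠ k in atTop, L ^ k < ∫ x, f x ^ k ∂μ := by
  obtain ⟨c, hLc, hcx₀⟩ := exists_between hx₀
  have hc : 0 < c := hL.trans_lt hLc
  have hS : 0 < μ.real {x | c < f x} :=
    ENNReal.toReal_pos ((isOpen_lt continuous_const hf).measure_pos μ ⟨x₀, hcx₀⟩).ne'
      (measure_ne_top μ _)
  have hratio : Tendsto (fun k : ℕ => (L / c) ^ k) atTop (𝓝 0) :=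
    tendsto_pow_atTop_nhds_zero_of_lt_one (div_nonneg hL hc.le) ((div_lt_one hc).mpr hLc)
  filter_upwards [hratio.eventually (gt_mem_nhds hS)] with k hk
  calc L ^ k = (L / c) ^ k * c ^ k := by rw [div_pow, div_mul_cancel₀ _ (pow_pos hc k).ne']
    _ < μ.real {x | c < f x} * c ^ k := by gcongr
    _ ≤ ∫ x, f x ^ k ∂μ := by
        rw [mul_comm]; exact pow_mul_measureReal_lt_le_integral_pow μ hf hf0 hc.le k

theorem unitaryGroup_moment_gt_general {n : ℕ} (hn : 1 ≤ n)
    [MeasurableSpace (Matrix.unitaryGroup (Fin n) ℂ)]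
    [BorelSpace (Matrix.unitaryGroup (Fin n) ℂ)]
    (μ : Measure (Matrix.unitaryGroup (Fin n) ℂ)) [μ.IsHaarMeasure] :
    ∃ N : ℕ, ∀ a : ℕ, N < a →
      ((n : ℝ) - 1) ^ (2 * a) <
        ∫ u : Matrix.unitaryGroup (Fin n) ℂ,
          ‖Matrix.trace (u : Matrix (Fin n) (Fin n) ℂ)‖ ^ (2 * a) ∂μ := by
  have htrace_one : ‖trace ((1 : unitaryGroup (Fin n) ℂ) : Matrix (Fin n) (Fin n) ℂ)‖ = n := by
    simp
  have hL : (0 : ℝ) ≤ n - 1 := sub_nonneg.mpr (by exact_mod_cast hn)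
  obtain ⟨N, hN⟩ := eventually_atTop.mp <|
    eventually_pow_lt_integral_pow μ continuous_subtype_val.matrix_trace.norm
      (fun _ => norm_nonneg _) hL (x₀ := 1) (by rw [htrace_one]; linarith)
  exact ⟨N, fun a ha => hN (2 * a) (by omega)⟩

/-- for any finite-dimensional Hermitian vector space `V` (modelled as
`ℂ^n` with its standard Hermitian form), there exists `N` such that for all `a > N`
the `(a,a)`-moment of the Sato–Tate measure of the unitary group satisfies
`∫_{U(V)} |tr u|^{2a} du > (dim V − 1)^{2a}`, where `du` is normalized Haar measure. -/
theorem unitaryGroup_moment_gt {n : ℕ} (hn : 1 ≤ n)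
    [MeasurableSpace (Matrix.unitaryGroup (Fin n) ℂ)]
    [BorelSpace (Matrix.unitaryGroup (Fin n) ℂ)]
    (μ : Measure (Matrix.unitaryGroup (Fin n) ℂ)) [μ.IsHaarMeasure]
    [IsProbabilityMeasure μ] :
    ∃ N : ℕ, ∀ a : ℕ, N < a →
      ((n : ℝ) - 1) ^ (2 * a) <
        ∫ u : Matrix.unitaryGroup (Fin n) ℂ,
          ‖Matrix.trace (u : Matrix (Fin n) (Fin n) ℂ)‖ ^ (2 * a) ∂μ :=
  unitaryGroup_moment_gt_general hn μ
end

section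
/- Let G be a compact Lie group whose identity component is a torus T of positive dimension, and V a faithful finite-dimensional representation. Then the Sato-Tate measure μ_{G,V} is the limit (in the sense of convergence of all moments) of the Sato-Tate measures μ_{G_n,V} for the proper subgroups G_n constructed from n-torsion approximation: for every fixed pair (a,b), F_{G,V}(a,b) = F_{G_n,V}(a,b) for all but finitely many n. -/
set_option maxHeartbeats 1000000


open MeasureTheory Matrix
open scoped Manifold

/-- Concrete model of the mixed tensor space `V^{⊗a} ⊗ (V*)^{⊗b}` for `V = ℂ^d`. -/
abbrev MixedTensor (d a b : ℕ) : Type := ((Fin a → Fin d) × (Fin b → Fin d)) → ℂ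

/-- The linear action of a group element on the mixed tensor space, given a matrix
representation `ρ` (the action on `V^{⊗a}` by `ρ g` and on `(V*)^{⊗b}` by the
transpose-inverse). -/
noncomputable def mixedMap {G : Type*} [Group G] {d : ℕ} (ρ : G →* GL (Fin d) ℂ)
    (a b : ℕ) (g : G) : MixedTensor d a b →ₗ[ℂ] MixedTensor d a b where
  toFun M p := ∑ q : (Fin a → Fin d) × (Fin b → Fin d),
    (∏ i, (ρ g : Matrix (Fin d) (Fin d) ℂ) (p.1 i) (q.1 i)) *
      (∏ j, ((ρ g)⁻¹ : Matrix (Fin d) (Fin d) ℂ) (q.2 j) (p.2 j)) * M q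
  map_add' M N := by
    funext p
    simp [mul_add, Finset.sum_add_distrib]
  map_smul' c M := by
    funext p
    simp [Finset.mul_sum]
    ring_nf
    simp [mul_comm, mul_assoc, mul_left_comm]

/-- The space of `G`-invariants in the mixed tensor space. -/
noncomputable def mixedInvariants {G : Type*} [Group G] {d : ℕ} (ρ : G →* GL (Fin d) ℂ)
    (a b : ℕ) : Submodule ℂ (MixedTensor d a b) :=
  ⨅ g : G, LinearMap.ker (mixedMap ρ a b g - LinearMap.id)

/-- The Sato–Tate function `F_{G,V}(a,b) = dim (V^{⊗a} ⊗ (V*)^{⊗b})^G`. -/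
noncomputable def satoTateF {G : Type*} [Group G] {d : ℕ} (ρ : G →* GL (Fin d) ℂ)
    (a b : ℕ) : ℕ :=
  Module.finrank ℂ (mixedInvariants ρ a b)

/-- The identity component `G°` of `G`. -/
abbrev idComp (G : Type*) [TopologicalSpace G] [Group G] [IsTopologicalGroup G] : Subgroup G :=
  Subgroup.connectedComponentOfOne G

/-- The center `Z` of the identity component `G°`, as a subgroup of `G`. -/
abbrev centerIdComp (G : Type*) [TopologicalSpace G] [Group G] [IsTopologicalGroup G] : Subgroup G :=
  Subgroup.centralizer (idComp G : Set G) ⊓ idComp G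

section AuxLemmas

open Filter Topology

namespace SatoTateAux

variable {G : Type*} [Group G] {d : ℕ}

/-- The matrix of `mixedMap ρ a b g` in the standard basis. -/
noncomputable def bigMat (ρ : G →* GL (Fin d) ℂ) (a b : ℕ) (g : G) :
    Matrix ((Fin a → Fin d) × (Fin b → Fin d)) ((Fin a → Fin d) × (Fin b → Fin d)) ℂ :=
  fun p q => (∏ i, (ρ g : Matrix (Fin d) (Fin d) ℂ) (p.1 i) (q.1 i)) *
      (∏ j, ((ρ g)⁻¹ : Matrix (Fin d) (Fin d) ℂ) (q.2 j) (p.2 j))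

lemma mixedMap_apply (ρ : G →* GL (Fin d) ℂ) (a b : ℕ) (g : G) (M : MixedTensor d a b)
    (p : (Fin a → Fin d) × (Fin b → Fin d)) :
    mixedMap ρ a b g M p = ∑ q : (Fin a → Fin d) × (Fin b → Fin d),
      (∏ i, (ρ g : Matrix (Fin d) (Fin d) ℂ) (p.1 i) (q.1 i)) *
        (∏ j, ((ρ g)⁻¹ : Matrix (Fin d) (Fin d) ℂ) (q.2 j) (p.2 j)) * M q := rfl

lemma mixedMap_eq_mulVec (ρ : G →* GL (Fin d) ℂ) (a b : ℕ) (g : G) (M : MixedTensor d a b) :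
    mixedMap ρ a b g M = (bigMat ρ a b g).mulVec M := by
  funext p
  simp [mixedMap_apply, bigMat, Matrix.mulVec, dotProduct]

lemma kron_sum_mul_mul {m : ℕ} (A B : Matrix (Fin d) (Fin d) ℂ) (p r : Fin m → Fin d) :
    ∑ q : Fin m → Fin d, ∏ i, (A (p i) (q i) * B (q i) (r i)) = ∏ i, (A * B) (p i) (r i) := by
  simp only [Matrix.mul_apply]
  exact (Fintype.prod_sum fun i j => A (p i) j * B j (r i)).symm

lemma bigMat_mul (ρ : G →* GL (Fin d) ℂ) (a b : ℕ) (g h : G) :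
    bigMat ρ a b (g * h) = bigMat ρ a b g * bigMat ρ a b h := by
  have e1 : ((ρ (g * h) : Matrix (Fin d) (Fin d) ℂ))
      = (ρ g : Matrix (Fin d) (Fin d) ℂ) * (ρ h : Matrix (Fin d) (Fin d) ℂ) := by
    rw [_root_.map_mul]
    rfl
  have e2 : (((ρ (g * h))⁻¹ : Matrix (Fin d) (Fin d) ℂ))
      = ((ρ h)⁻¹ : Matrix (Fin d) (Fin d) ℂ) * ((ρ g)⁻¹ : Matrix (Fin d) (Fin d) ℂ) := by
    rw [e1, Matrix.mul_inv_rev]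
  funext p r
  rw [Matrix.mul_apply, Fintype.sum_prod_type]
  simp only [bigMat]
  rw [e2, e1]
  rw [← kron_sum_mul_mul, ← kron_sum_mul_mul, Fintype.sum_mul_sum]
  refine Finset.sum_congr rfl fun q1 _ => Finset.sum_congr rfl fun q2 _ => ?_
  rw [Finset.prod_mul_distrib, Finset.prod_mul_distrib]
  ring

lemma bigMat_one (ρ : G →* GL (Fin d) ℂ) (a b : ℕ) : bigMat ρ a b 1 = 1 := by
  have e1 : ((ρ (1 : G) : Matrix (Fin d) (Fin d) ℂ)) = (1 : Matrix (Fin d) (Fin d) ℂ) := by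
    rw [_root_.map_one]
    rfl
  have e2 : (((ρ (1 : G))⁻¹ : Matrix (Fin d) (Fin d) ℂ)) = (1 : Matrix (Fin d) (Fin d) ℂ) := by
    rw [← Matrix.coe_units_inv, ← _root_.map_inv, inv_one]
    exact e1
  funext p q
  simp only [bigMat]
  rw [e2, e1]
  by_cases h : p = q
  · subst h
    simp [Matrix.one_apply_eq]
  · rw [Matrix.one_apply_ne h]
    have hpq : ¬ (p.1 = q.1 ∧ p.2 = q.2) := fun hc => h (Prod.ext hc.1 hc.2)
    rcases not_and_or.mp hpq with h1 | h1
    · obtain ⟨i, hi⟩ := Function.ne_iff.mp h1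
      have hz : (∏ i' : Fin a, (1 : Matrix (Fin d) (Fin d) ℂ) (p.1 i') (q.1 i')) = 0 :=
        Finset.prod_eq_zero (Finset.mem_univ i) (Matrix.one_apply_ne hi)
      rw [hz, zero_mul]
    · obtain ⟨j, hj⟩ := Function.ne_iff.mp h1
      have hz : (∏ j' : Fin b, (1 : Matrix (Fin d) (Fin d) ℂ) (q.2 j') (p.2 j')) = 0 :=
        Finset.prod_eq_zero (Finset.mem_univ j) (Matrix.one_apply_ne (Ne.symm hj))
      rw [hz, mul_zero]

lemma mixedMap_mul_apply (ρ : G →* GL (Fin d) ℂ) (a b : ℕ) (g h : G) (M : MixedTensor d a b) :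
    mixedMap ρ a b (g * h) M = mixedMap ρ a b g (mixedMap ρ a b h M) := by
  simp only [mixedMap_eq_mulVec, Matrix.mulVec_mulVec, bigMat_mul]

lemma mem_mixedInvariants {ρ : G →* GL (Fin d) ℂ} {a b : ℕ} {v : MixedTensor d a b} :
    v ∈ mixedInvariants ρ a b ↔ ∀ g : G, mixedMap ρ a b g v = v := by
  simp [mixedInvariants, Submodule.mem_iInf, LinearMap.mem_ker, LinearMap.sub_apply,
    sub_eq_zero]

end SatoTateAux

end AuxLemmas

section AuxLemmas2

open Filter Topology

namespace SatoTateAux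

lemma exists_unit_far_from {E : Type*} [NormedAddCommGroup E] [NormedSpace ℂ E]
    [FiniteDimensional ℂ E] {F K : Submodule ℂ E} (hFK : F ≤ K) (h : ¬ K ≤ F) :
    ∃ v : E, v ∈ K ∧ ‖v‖ = 1 ∧ ∀ y ∈ F, (1 : ℝ) / 2 ≤ ‖v - y‖ := by
  obtain ⟨x, hxK, hxF⟩ := SetLike.not_le_iff_exists.mp h
  set F' : Submodule ℂ K := F.comap K.subtype with hF'
  have hclosed : IsClosed (F' : Set K) := Submodule.closed_of_finiteDimensional F'
  have hx' : ∃ y : K, y ∉ F' := ⟨⟨x, hxK⟩, by simpa [hF', Submodule.mem_comap] using hxF⟩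
  obtain ⟨x₀, hx₀, hx₀F⟩ := riesz_lemma hclosed hx' (r := 1/2) (by norm_num)
  have hx0 : (x₀ : E) ≠ 0 := by
    intro h0
    exact hx₀ (by rw [show x₀ = 0 from Subtype.ext h0]; exact F'.zero_mem)
  have hn : ‖(x₀ : E)‖ ≠ 0 := norm_ne_zero_iff.mpr hx0
  set c : ℂ := (‖(x₀ : E)‖ : ℂ) with hcdef
  have hc : ‖c‖ = ‖(x₀ : E)‖ := by
    rw [hcdef, Complex.norm_real, Real.norm_eq_abs, abs_of_nonneg (norm_nonneg _)]
  have hc0 : c ≠ 0 := by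
    simp only [hcdef, ne_eq, Complex.ofReal_eq_zero]
    exact hn
  refine ⟨c⁻¹ • (x₀ : E), K.smul_mem _ x₀.2, ?_, ?_⟩
  · rw [norm_smul, norm_inv, hc, inv_mul_cancel₀ hn]
  · intro y hy
    have hyF' : (⟨c • y, hFK (F.smul_mem c hy)⟩ : K) ∈ F' := by
      simpa [hF', Submodule.mem_comap] using F.smul_mem c hy
    have key : (1 : ℝ) / 2 * ‖(x₀ : E)‖ ≤ ‖(x₀ : E) - c • y‖ := hx₀F _ hyF'
    have hvy : c⁻¹ • (x₀ : E) - y = c⁻¹ • ((x₀ : E) - c • y) := by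
      rw [smul_sub, smul_smul, inv_mul_cancel₀ hc0, one_smul]
    rw [hvy, norm_smul, norm_inv, hc]
    have h2 : (1 : ℝ) / 2 = ‖(x₀ : E)‖⁻¹ * ((1 : ℝ) / 2 * ‖(x₀ : E)‖) := by
      field_simp
    rw [h2]
    exact mul_le_mul_of_nonneg_left key (by positivity)

lemma core_eventually {T : Type*} [Group T] [TopologicalSpace T]
    {E : Type*} [NormedAddCommGroup E] [NormedSpace ℂ E] [FiniteDimensional ℂ E]
    (D : T → (E →ₗ[ℂ] E)) (hD : Continuous fun p : T × E => D p.1 p.2)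
    (htors : ∀ z : T, ∀ u : ℕ → ℕ, StrictMono u →
      ∃ w : ℕ → T, (∀ j, (w j) ^ (u j) = 1) ∧ Tendsto w atTop (𝓝 z)) :
    ∀ᶠ n in atTop, ∀ v : E, (∀ t : T, t ^ n = 1 → D t v = v) → ∀ t : T, D t v = v := by
  set F : Submodule ℂ E := ⨅ t : T, LinearMap.ker (D t - LinearMap.id) with hF
  have hmemF : ∀ v : E, v ∈ F ↔ ∀ t : T, D t v = v := by
    intro v
    simp [hF, Submodule.mem_iInf, LinearMap.mem_ker, LinearMap.sub_apply, sub_eq_zero]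
  set K : ℕ → Submodule ℂ E :=
    fun n => ⨅ (t : T) (_ : t ^ n = 1), LinearMap.ker (D t - LinearMap.id) with hK
  have hmemK : ∀ (n : ℕ) (v : E), v ∈ K n ↔ ∀ t : T, t ^ n = 1 → D t v = v := by
    intro n v
    simp [hK, Submodule.mem_iInf, LinearMap.mem_ker, LinearMap.sub_apply, sub_eq_zero]
  have hFK : ∀ n, F ≤ K n := by
    intro n v hv
    rw [hmemK]
    intro t _
    exact (hmemF v).mp hv t
  by_contra hbad
  rw [Filter.not_eventually] at hbad
  have hbad' : ∃ᶠ n in atTop, ¬ K n ≤ F := by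
    refine hbad.mono fun n hn => ?_
    push_neg at hn
    obtain ⟨v, hv1, t, ht⟩ := hn
    intro hle
    exact ht ((hmemF v).mp (hle ((hmemK n v).mpr hv1)) t)
  obtain ⟨u, hu, hKu⟩ := Filter.extraction_of_frequently_atTop hbad'
  choose v hvK hvnorm hvfar using fun j => exists_unit_far_from (hFK (u j)) (hKu j)
  have hsphere : ∀ j, v j ∈ Metric.sphere (0 : E) 1 := by
    intro j
    simp [mem_sphere_iff_norm, hvnorm j]
  haveI : ProperSpace E := FiniteDimensional.proper ℂ E
  obtain ⟨c, -, ψ, hψ, hvc⟩ := (isCompact_sphere (0 : E) 1).tendsto_subseq hsphere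
  have hcF : c ∈ F := by
    rw [hmemF]
    intro t
    obtain ⟨w, hw1, hw2⟩ := htors t (u ∘ ψ) (hu.comp hψ)
    have h1 : Tendsto (fun j => D (w j) (v (ψ j))) atTop (𝓝 (D t c)) := by
      have h2 : Tendsto (fun j => ((w j : T), v (ψ j))) atTop (𝓝 (t, c)) :=
        hw2.prodMk_nhds hvc
      exact (hD.tendsto (t, c)).comp h2
    have h3 : (fun j => D (w j) (v (ψ j))) = fun j => v (ψ j) := by
      funext j
      exact (hmemK (u (ψ j)) (v (ψ j))).mp (hvK (ψ j)) (w j) (hw1 j)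
    rw [h3] at h1
    exact tendsto_nhds_unique h1 hvc
  have hlim : Tendsto (fun j => ‖v (ψ j) - c‖) atTop (𝓝 0) := by
    have := (hvc.sub_const c).norm
    simpa using this
  have hge : (1 : ℝ) / 2 ≤ 0 :=
    ge_of_tendsto hlim (Filter.Eventually.of_forall fun j => hvfar (ψ j) c hcF)
  linarith

lemma circle_exp_pow (x : ℝ) (n : ℕ) : (Circle.exp x) ^ n = Circle.exp (n * x) := by
  induction n with
  | zero => simp
  | succ n ih =>
    rw [pow_succ, ih, ← Circle.exp_add]
    congr 1
    push_cast
    ring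

lemma circle_torsion_approx (z : Circle) (u : ℕ → ℕ) (hu : StrictMono u) :
    ∃ w : ℕ → Circle, (∀ j, (w j) ^ (u j) = 1) ∧ Tendsto w atTop (𝓝 z) := by
  obtain ⟨θ, hθ⟩ : ∃ θ : ℝ, Circle.exp θ = z := ⟨_, Circle.exp_arg z⟩
  have hπ : (0 : ℝ) < 2 * Real.pi := by positivity
  set t : ℕ → ℝ := fun j => 2 * Real.pi * (⌊θ * u j / (2 * Real.pi)⌋ : ℤ) / u j with ht
  have key : ∀ j : ℕ, 0 < (u j : ℝ) → θ - 2 * Real.pi / u j ≤ t j ∧ t j ≤ θ := by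
    intro j hj
    have h1 : ((⌊θ * u j / (2 * Real.pi)⌋ : ℤ) : ℝ) ≤ θ * u j / (2 * Real.pi) :=
      Int.floor_le _
    have h2 : θ * u j / (2 * Real.pi) < (⌊θ * u j / (2 * Real.pi)⌋ : ℤ) + 1 :=
      Int.lt_floor_add_one _
    have h1' : ((⌊θ * u j / (2 * Real.pi)⌋ : ℤ) : ℝ) * (2 * Real.pi) ≤ θ * u j :=
      (le_div_iff₀ hπ).mp h1
    have h2' : θ * u j < (((⌊θ * u j / (2 * Real.pi)⌋ : ℤ) : ℝ) + 1) * (2 * Real.pi) :=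
      (div_lt_iff₀ hπ).mp h2
    have hjne : ((u j : ℝ)) ≠ 0 := ne_of_gt hj
    have htj : t j = 2 * Real.pi * ((⌊θ * u j / (2 * Real.pi)⌋ : ℤ) : ℝ) / u j := by
      rw [ht]
    constructor
    · rw [htj, le_div_iff₀ hj]
      have e : (θ - 2 * Real.pi / (u j : ℝ)) * (u j : ℝ) = θ * (u j : ℝ) - 2 * Real.pi := by
        field_simp
      rw [e]
      nlinarith
    · rw [htj, div_le_iff₀ hj]
      nlinarith
  have hupos : Tendsto (fun j => (u j : ℝ)) atTop atTop :=
    tendsto_natCast_atTop_atTop.comp hu.tendsto_atTop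
  have h0 : Tendsto (fun j => 2 * Real.pi / (u j : ℝ)) atTop (𝓝 0) :=
    hupos.const_div_atTop _
  have hlow : Tendsto (fun j => θ - 2 * Real.pi / (u j : ℝ)) atTop (𝓝 θ) := by
    have := h0.const_sub θ
    simpa using this
  have hev : ∀ᶠ j in atTop, 0 < (u j : ℝ) := by
    filter_upwards [hu.tendsto_atTop.eventually_ge_atTop 1] with j hj
    exact_mod_cast Nat.lt_of_lt_of_le Nat.zero_lt_one hj
  have hts : Tendsto t atTop (𝓝 θ) := by
    refine tendsto_of_tendsto_of_tendsto_of_le_of_le' hlow tendsto_const_nhds ?_ ?_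
    · filter_upwards [hev] with j hj
      exact (key j hj).1
    · filter_upwards [hev] with j hj
      exact (key j hj).2
  refine ⟨fun j => Circle.exp (t j), ?_, ?_⟩
  · intro j
    rcases Nat.eq_zero_or_pos (u j) with h0j | hposj
    · rw [h0j, pow_zero]
    · rw [circle_exp_pow]
      have hne : ((u j : ℝ)) ≠ 0 := by positivity
      have : (u j : ℝ) * t j = ((⌊θ * u j / (2 * Real.pi)⌋ : ℤ) : ℝ) * (2 * Real.pi) := by
        rw [ht]
        field_simp
      rw [this]
      exact Circle.exp_int_mul_two_pi _
  · have := (Circle.exp.continuous.tendsto θ).comp hts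
    rwa [hθ] at this

lemma torus_torsion_approx {k : ℕ} (z : Fin k → Circle) (u : ℕ → ℕ) (hu : StrictMono u) :
    ∃ w : ℕ → (Fin k → Circle), (∀ j, (w j) ^ (u j) = 1) ∧ Tendsto w atTop (𝓝 z) := by
  choose w hw1 hw2 using fun i => circle_torsion_approx (z i) u hu
  refine ⟨fun j i => w i j, ?_, ?_⟩
  · intro j
    funext i
    simpa using hw1 i j
  · rw [tendsto_pi_nhds]
    intro i
    exact hw2 i

lemma mixedMap_joint_continuous {G X : Type*} [Group G] [TopologicalSpace G]
    [IsTopologicalGroup G] [TopologicalSpace X] {d : ℕ} (ρ : G →* GL (Fin d) ℂ)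
    (hcont : Continuous fun g : G => (ρ g : Matrix (Fin d) (Fin d) ℂ)) (a b : ℕ)
    {ψ : X → G} (hψ : Continuous ψ) :
    Continuous fun p : X × MixedTensor d a b => mixedMap ρ a b (ψ p.1) p.2 := by
  have hinv : Continuous fun g : G => ((ρ g)⁻¹ : Matrix (Fin d) (Fin d) ℂ) := by
    have e : (fun g : G => ((ρ g)⁻¹ : Matrix (Fin d) (Fin d) ℂ))
        = fun g : G => (ρ g⁻¹ : Matrix (Fin d) (Fin d) ℂ) := by
      funext g
      rw [← Matrix.coe_units_inv, ← _root_.map_inv]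
    rw [e]
    exact hcont.comp continuous_inv
  apply continuous_pi
  intro p
  simp only [mixedMap_apply]
  apply continuous_finset_sum
  intro q _
  refine Continuous.mul (Continuous.mul ?_ ?_) ?_
  · exact continuous_finset_prod _ fun i _ =>
      (hcont.comp (hψ.comp continuous_fst)).matrix_elem _ _
  · exact continuous_finset_prod _ fun j _ =>
      (hinv.comp (hψ.comp continuous_fst)).matrix_elem _ _
  · exact (continuous_apply q).comp continuous_snd

end SatoTateAux

end AuxLemmas2

/-- let `G` be a compact Lie group whose identity component is a torus
of positive dimension, `V` a faithful finite-dimensional representation, and `Gₙ` the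
proper closed subgroups coming from `n`-torsion approximation (`Gₙ · Z° = G` and
`Z[n] ⊆ Gₙ`).  Then the Sato–Tate measure of `(G, V)` is the limit of those of
`(Gₙ, V)` in the sense of moments: for each fixed `(a, b)`,
`F_{G,V}(a,b) = F_{Gₙ,V}(a,b)` for all but finitely many `n`. -/
theorem satoTateF_eventually_eq_of_torsion_approximation
    {E : Type*} [NormedAddCommGroup E] [NormedSpace ℝ E] [FiniteDimensional ℝ E]
    {G : Type*} [TopologicalSpace G] [ChartedSpace E G] [Group G] [IsTopologicalGroup G]
    [LieGroup 𝓘(ℝ, E) (⊤ : ℕ∞) G] [CompactSpace G] [T2Space G]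
    (htorus : ∃ k : ℕ, 0 < k ∧ ∃ φ : (Fin k → Circle) →* G,
      Continuous φ ∧ Function.Injective φ ∧ φ.range = idComp G)
    {d : ℕ} (ρ : G →* GL (Fin d) ℂ)
    (hcont : Continuous fun g : G => (ρ g : Matrix (Fin d) (Fin d) ℂ))
    (hfaithful : Function.Injective ρ)
    (Gn : ℕ → Subgroup G) (hGnclosed : ∀ n, IsClosed (Gn n : Set G))
    (hGnZ : ∀ n, ∀ g : G, ∃ h ∈ Gn n, ∃ z ∈ idComp G, g = h * z)
    (hGntors : ∀ n, ∀ z ∈ centerIdComp G, z ^ n = 1 → z ∈ Gn n)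
    (a b : ℕ) :
    ∀ᶠ n in Filter.atTop, satoTateF (ρ.comp (Gn n).subtype) a b = satoTateF ρ a b := by
  obtain ⟨k, hk, φ, hφc, hφinj, hφrange⟩ := htorus
  have hjoint : Continuous fun p : (Fin k → Circle) × MixedTensor d a b =>
      mixedMap ρ a b (φ p.1) p.2 :=
    SatoTateAux.mixedMap_joint_continuous ρ hcont a b hφc
  have hcore := SatoTateAux.core_eventually (T := Fin k → Circle)
    (fun t => mixedMap ρ a b (φ t)) hjoint
    (fun z u hu => SatoTateAux.torus_torsion_approx z u hu)
  filter_upwards [hcore] with n hn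
  have hEq : mixedInvariants (ρ.comp (Gn n).subtype) a b = mixedInvariants ρ a b := by
    apply le_antisymm
    · intro v hv
      rw [SatoTateAux.mem_mixedInvariants] at hv ⊢
      have hvG : ∀ g : G, g ∈ Gn n → mixedMap ρ a b g v = v := fun g hg => hv ⟨g, hg⟩
      have hT : ∀ t : Fin k → Circle, mixedMap ρ a b (φ t) v = v := by
        apply hn v
        intro t ht
        have hid : φ t ∈ idComp G := by
          rw [← hφrange]
          exact MonoidHom.mem_range.mpr ⟨t, rfl⟩
        have hcen : φ t ∈ Subgroup.centralizer (idComp G : Set G) := by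
          rw [Subgroup.mem_centralizer_iff]
          intro h hh
          rw [← hφrange] at hh
          obtain ⟨s, rfl⟩ := MonoidHom.mem_range.mp hh
          rw [← _root_.map_mul, ← _root_.map_mul, mul_comm]
        have htorsn : (φ t) ^ n = 1 := by
          rw [← _root_.map_pow, ht, _root_.map_one]
        exact hvG (φ t) (hGntors n (φ t) (Subgroup.mem_inf.mpr ⟨hcen, hid⟩) htorsn)
      intro g
      obtain ⟨h, hh, z, hz, rfl⟩ := hGnZ n g
      rw [← hφrange] at hz
      obtain ⟨t, rfl⟩ := MonoidHom.mem_range.mp hz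
      rw [SatoTateAux.mixedMap_mul_apply, hT t]
      exact hvG h hh
    · intro v hv
      rw [SatoTateAux.mem_mixedInvariants] at hv ⊢
      intro h
      exact hv (h : G)
  unfold satoTateF
  rw [hEq]
end
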